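/- Let (δ, ω) be a solution of the fault-on swing equations on ℝ with δ(0) = δˢ and ω(0) = 0, and set u_i := (1/M_i)[ (P_{m,i} − P^{on}_{a,i}) − ∑_{k≠i} P̄^{on}_{ik} sin(δˢ_i − δˢ_k) ]. Then the post-fault energy along the trajectory admits the second-order expansion H(δ(t), ω(t)) = H(δˢ, 0) + β̃ t² + o(t²) as t → 0, where β̃ = ½ ∑_{i=1}^n (P_{a,i} − P^{on}_{a,i}) u_i + ½ ∑_{i<k} (P̄_{ik} − P̄^{on}_{ik}) sin(δˢ_i − δˢ_k)(u_i − u_k). -/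

import Mathlib

/-!
Write `F(t) = H(δ(t), ω(t))` and `DH(δ, ω)(δ', ω')` (`postEnergyDirDeriv`) for the
directional derivative of `H`. Then `F'(t) = DH(δ, ω)(ω, ω̇)`, which vanishes at `t = 0`
since the trajectory starts at rest. Differentiating once more at `t = 0`, the terms still
carrying a factor `ω(0)` drop out and `F''(0) = DH(δˢ, u)(u, u)`. Substituting the fault-on
equation `Mᵢ uᵢ = …` into the kinetic term `∑ Mᵢ uᵢ²` and antisymmetrising the coupling sum
(by symmetry of `P̄^{on}`) gives `F''(0) = 2β̃`, and a second-order Taylor expansion (mean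
value theorem) concludes.
-/

open Real Finset Asymptotics

/-- Post-fault energy function for the swing equations:
`H(δ, ω) = ∑ ½ Mᵢ ωᵢ² − ∑ (P_{m,i} − P_{a,i}) δᵢ − ∑_{i<k} P̄ᵢₖ cos(δᵢ − δₖ)`. -/
noncomputable def postEnergy (n : ℕ) (M Pm Pa : Fin n → ℝ) (Pb : Fin n → Fin n → ℝ)
    (δ ω : Fin n → ℝ) : ℝ :=
  (∑ i, (1 / 2) * M i * ω i ^ 2) - (∑ i, (Pm i - Pa i) * δ i)
    - ∑ i, ∑ k ∈ Finset.Ioi i, Pb i k * Real.cos (δ i - δ k)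

open Topology

theorem isLittleO_sub_sub_sq_of_hasDerivAt {E : Type*} [NormedAddCommGroup E]
    [NormedSpace ℝ E] {f f' : ℝ → E} {b : E} {x₀ : ℝ} (hf : ∀ x, HasDerivAt f (f' x) x)
    (hf'₀ : f' x₀ = 0) (hf' : HasDerivAt f' b x₀) :
    (fun x => f x - f x₀ - ((x - x₀) ^ 2 / 2) • b) =o[𝓝 x₀] fun x => (x - x₀) ^ 2 := by
  have hg : ∀ x,
      HasDerivAt (fun x => f x - ((x - x₀) ^ 2 / 2) • b) (f' x - (x - x₀) • b) x :=
    fun x => (hf x).sub <|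
      ((((hasDerivAt_id x).sub_const x₀).pow 2).div_const 2 |>.smul_const b).congr_deriv
        (by simp)
  have hg' : (fun x => f' x - (x - x₀) • b) =o[𝓝 x₀] fun x => (x - x₀) ^ 1 := by
    simpa [hf'₀] using hasDerivAt_iff_isLittleO.mp hf'
  simpa [sub_sub, add_comm] using convex_univ.isLittleO_pow_succ_real (Set.mem_univ x₀)
    (fun x _ => (hg x).hasDerivWithinAt) (by simpa using hg')

theorem Finset.sum_sum_compl_mul_eq_sum_sum_Ioi_mul_sub {ι R : Type*} [CommRing R]
    [LinearOrder ι] [Fintype ι] [LocallyFiniteOrderTop ι] [LocallyFiniteOrderBot ι]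
    (a : ι → ι → R) (ha : ∀ i j, a j i = -a i j) (u : ι → R) :
    ∑ i, ∑ j ∈ {i}ᶜ, a i j * u i = ∑ i, ∑ j ∈ Ioi i, a i j * (u i - u j) := by
  rw [← sum_sum_Ioi_add_eq_sum_sum_off_diag (fun j i => a i j * u i)]
  refine sum_congr rfl fun i _ => sum_congr rfl fun j _ => ?_
  rw [ha]
  ring

section SwingEnergy

variable (n : ℕ) (M Pm Pa : Fin n → ℝ) (Pb : Fin n → Fin n → ℝ)

noncomputable def postEnergyDirDeriv (δ ω δ' ω' : Fin n → ℝ) : ℝ :=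
  ∑ i, M i * ω i * ω' i - ∑ i, (Pm i - Pa i) * δ' i
    + ∑ i, ∑ k ∈ Ioi i, Pb i k * sin (δ i - δ k) * (δ' i - δ' k)

@[simp]
theorem postEnergyDirDeriv_zero (δ ω' : Fin n → ℝ) :
    postEnergyDirDeriv n M Pm Pa Pb δ 0 0 ω' = 0 := by
  simp [postEnergyDirDeriv]

variable {n M Pm Pa Pb}

theorem hasDerivAt_postEnergy {δ ω : ℝ → Fin n → ℝ} {δ' ω' : Fin n → ℝ} {t : ℝ}
    (hδ : ∀ i, HasDerivAt (fun s => δ s i) (δ' i) t)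
    (hω : ∀ i, HasDerivAt (fun s => ω s i) (ω' i) t) :
    HasDerivAt (fun s => postEnergy n M Pm Pa Pb (δ s) (ω s))
      (postEnergyDirDeriv n M Pm Pa Pb (δ t) (ω t) δ' ω') t := by
  have hkin := HasDerivAt.fun_sum fun i (_ : i ∈ univ) =>
    ((hω i).fun_pow 2).const_mul ((1 / 2) * M i)
  have hpot := HasDerivAt.fun_sum fun i (_ : i ∈ univ) => (hδ i).const_mul (Pm i - Pa i)
  have hcpl := HasDerivAt.fun_sum fun i (_ : i ∈ univ) =>
    HasDerivAt.fun_sum fun k (_ : k ∈ Ioi i) => (((hδ i).fun_sub (hδ k)).cos).const_mul (Pb i k)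
  refine ((hkin.fun_sub hpot).fun_sub hcpl).congr_deriv ?_
  simp only [postEnergyDirDeriv, neg_mul, mul_neg, sum_neg_distrib, sub_neg_eq_add]
  ring_nf

/-- At a rest point every term carrying a factor `ω t` drops out, which leaves a directional
derivative again. -/
theorem hasDerivAt_postEnergyDirDeriv_at_rest {δ ω W : ℝ → Fin n → ℝ} {a : Fin n → ℝ}
    {t : ℝ}
    (hδ : ∀ i, DifferentiableAt ℝ (fun s => δ s i) t)
    (hω : ∀ i, HasDerivAt (fun s => ω s i) (a i) t)
    (hW : ∀ i, DifferentiableAt ℝ (fun s => W s i) t) (hrest : ω t = 0) :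
    HasDerivAt (fun s => postEnergyDirDeriv n M Pm Pa Pb (δ s) (ω s) (ω s) (W s))
      (postEnergyDirDeriv n M Pm Pa Pb (δ t) a a (W t)) t := by
  have hkin := HasDerivAt.fun_sum fun i (_ : i ∈ univ) =>
    ((hω i).const_mul (M i)).fun_mul (hW i).hasDerivAt
  have hpot := HasDerivAt.fun_sum fun i (_ : i ∈ univ) => (hω i).const_mul (Pm i - Pa i)
  have hcpl := HasDerivAt.fun_sum fun i (_ : i ∈ univ) =>
    HasDerivAt.fun_sum fun k (_ : k ∈ Ioi i) =>
      ((((hδ i).hasDerivAt.fun_sub (hδ k).hasDerivAt).sin).const_mul (Pb i k)).fun_mul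
        ((hω i).fun_sub (hω k))
  refine ((hkin.fun_sub hpot).fun_add hcpl).congr_deriv ?_
  simp [postEnergyDirDeriv, hrest]

theorem postEnergyDirDeriv_eq_of_mul_eq {Paon : Fin n → ℝ} {Pbon : Fin n → Fin n → ℝ}
    (hPbon : ∀ i k, Pbon i k = Pbon k i) {δs u : Fin n → ℝ}
    (hMu : ∀ i, M i * u i
      = (Pm i - Paon i) - ∑ k ∈ univ.erase i, Pbon i k * sin (δs i - δs k)) :
    postEnergyDirDeriv n M Pm Pa Pb δs u u u
      = ∑ i, (Pa i - Paon i) * u i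
        + ∑ i, ∑ k ∈ Ioi i, (Pb i k - Pbon i k) * sin (δs i - δs k) * (u i - u k) := by
  have hanti : ∀ i k, Pbon k i * sin (δs k - δs i) = -(Pbon i k * sin (δs i - δs k)) := by
    intro i k
    rw [hPbon k i, ← neg_sub, sin_neg, mul_neg]
  have hsum := sum_sum_compl_mul_eq_sum_sum_Ioi_mul_sub _ hanti u
  simp only [compl_singleton] at hsum
  have hkin : ∑ i, M i * u i * u i = ∑ i, (Pm i - Paon i) * u i
      - ∑ i, ∑ k ∈ Ioi i, Pbon i k * sin (δs i - δs k) * (u i - u k) := by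
    rw [← hsum, ← sum_sub_distrib]
    refine sum_congr rfl fun i _ => ?_
    rw [hMu, ← sum_mul]
    ring
  rw [postEnergyDirDeriv, hkin]
  simp only [sub_mul, sum_sub_distrib]
  ring

end SwingEnergy

theorem postEnergy_second_order_expansion_general (n : ℕ)
    (M Pm Pa Paon : Fin n → ℝ) (hM : ∀ i, 0 < M i)
    (Pb Pbon : Fin n → Fin n → ℝ)
    (hsymon : ∀ i k, Pbon i k = Pbon k i)
    (δs : Fin n → ℝ) (δ ω : ℝ → Fin n → ℝ)
    (hδ : ∀ i, Differentiable ℝ fun t => δ t i)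
    (hω : ∀ i, Differentiable ℝ fun t => ω t i)
    (heq1 : ∀ (t : ℝ) (i : Fin n), deriv (fun s => δ s i) t = ω t i)
    (heq2 : ∀ (t : ℝ) (i : Fin n), M i * deriv (fun s => ω s i) t
      = (Pm i - Paon i) - ∑ k ∈ Finset.univ.erase i, Pbon i k * Real.sin (δ t i - δ t k))
    (h0 : δ 0 = δs) (hw0 : ω 0 = 0)
    (u : Fin n → ℝ)
    (hu : ∀ i, u i = (1 / M i) * ((Pm i - Paon i)
      - ∑ k ∈ Finset.univ.erase i, Pbon i k * Real.sin (δs i - δs k)))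
    (βt : ℝ)
    (hβ : βt = (1 / 2) * (∑ i, (Pa i - Paon i) * u i)
      + (1 / 2) * ∑ i, ∑ k ∈ Finset.Ioi i,
          (Pb i k - Pbon i k) * Real.sin (δs i - δs k) * (u i - u k)) :
    (fun t => postEnergy n M Pm Pa Pb (δ t) (ω t) - postEnergy n M Pm Pa Pb δs 0 - βt * t ^ 2)
      =o[nhds (0 : ℝ)] fun t => t ^ 2 := by
  set W : ℝ → Fin n → ℝ := fun t i => deriv (fun s => ω s i) t
  have hW : ∀ i, (fun t => W t i) = fun t => (M i)⁻¹ * ((Pm i - Paon i)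
      - ∑ k ∈ Finset.univ.erase i, Pbon i k * Real.sin (δ t i - δ t k)) :=
    fun i => funext fun t => (eq_inv_mul_iff_mul_eq₀ (hM i).ne').2 (heq2 t i)
  have hW0 : W 0 = u := funext fun i => by
    rw [hu i, one_div, ← h0]
    exact congrFun (hW i) 0
  have hWdiff : ∀ i, Differentiable ℝ fun t => W t i := fun i => by
    rw [hW i]
    fun_prop
  have hF : ∀ t, HasDerivAt (fun s => postEnergy n M Pm Pa Pb (δ s) (ω s))
      (postEnergyDirDeriv n M Pm Pa Pb (δ t) (ω t) (ω t) (W t)) t := fun t =>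
    hasDerivAt_postEnergy (fun i => heq1 t i ▸ (hδ i t).hasDerivAt) fun i => (hω i t).hasDerivAt
  have hF' : HasDerivAt (fun t => postEnergyDirDeriv n M Pm Pa Pb (δ t) (ω t) (ω t) (W t))
      (postEnergyDirDeriv n M Pm Pa Pb δs u u u) 0 := by
    rw [← h0, ← hW0]
    exact hasDerivAt_postEnergyDirDeriv_at_rest (fun i => hδ i 0) (fun i => (hω i 0).hasDerivAt)
      (fun i => hWdiff i 0) hw0
  have hMu : ∀ i, M i * u i
      = (Pm i - Paon i) - ∑ k ∈ Finset.univ.erase i, Pbon i k * Real.sin (δs i - δs k) := by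
    intro i
    rw [← hW0, ← h0]
    exact heq2 0 i
  refine (isLittleO_sub_sub_sq_of_hasDerivAt hF (by simp [hw0]) hF').congr (fun t => ?_)
    fun t => by rw [sub_zero]
  rw [postEnergyDirDeriv_eq_of_mul_eq hsymon hMu, hβ, h0, hw0, sub_zero, smul_eq_mul]
  ring

/-- The post-fault energy along a fault-on trajectory started at rest admits the
second-order expansion `H(t) = H(δˢ, 0) + β̃ t² + o(t²)` as `t → 0`. -/
theorem postEnergy_second_order_expansion (n : ℕ) (hn : 1 ≤ n)
    (M Pm Pa Paon : Fin n → ℝ) (hM : ∀ i, 0 < M i)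
    (Pb Pbon : Fin n → Fin n → ℝ)
    (hsym : ∀ i k, Pb i k = Pb k i) (hsymon : ∀ i k, Pbon i k = Pbon k i)
    (δs : Fin n → ℝ) (δ ω : ℝ → Fin n → ℝ)
    (hδ : ∀ i, Differentiable ℝ fun t => δ t i)
    (hω : ∀ i, Differentiable ℝ fun t => ω t i)
    (heq1 : ∀ (t : ℝ) (i : Fin n), deriv (fun s => δ s i) t = ω t i)
    (heq2 : ∀ (t : ℝ) (i : Fin n), M i * deriv (fun s => ω s i) t
      = (Pm i - Paon i) - ∑ k ∈ Finset.univ.erase i, Pbon i k * Real.sin (δ t i - δ t k))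
    (h0 : δ 0 = δs) (hw0 : ω 0 = 0)
    (u : Fin n → ℝ)
    (hu : ∀ i, u i = (1 / M i) * ((Pm i - Paon i)
      - ∑ k ∈ Finset.univ.erase i, Pbon i k * Real.sin (δs i - δs k)))
    (βt : ℝ)
    (hβ : βt = (1 / 2) * (∑ i, (Pa i - Paon i) * u i)
      + (1 / 2) * ∑ i, ∑ k ∈ Finset.Ioi i,
          (Pb i k - Pbon i k) * Real.sin (δs i - δs k) * (u i - u k)) :
    (fun t => postEnergy n M Pm Pa Pb (δ t) (ω t) - postEnergy n M Pm Pa Pb δs 0 - βt * t ^ 2)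
      =o[nhds (0 : ℝ)] fun t => t ^ 2 :=
  postEnergy_second_order_expansion_general n M Pm Pa Paon hM Pb Pbon hsymon δs δ ω hδ hω heq1 heq2
    h0 hw0 u hu βt hβ
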